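/- arXiv:1304.1851 — 7 statements merged into one kernel-verified Lean document; each statement's English description precedes it below -/
import Mathlib

section
/- For δ ∈ (0,1), A ≥ 0, B ≥ 0, define D(N) = N·exp(A(N-1)^{δ-1}N^{-δ} + B/N) and Q(N) = exp(2B/N + A(2N-1-δ)N^{-δ}(N-1)^{δ-2}) for real N > 1, and V(N) = N(N+1)Q(N) - D(N) - D(N)². Then V(N) → (2-δ)A + B as N → ∞. -/
/-!
With `D(N) = N e^{f(N)}` and `Q(N) = e^{2 f(N) + c(N)}`, the variance is exactly
`V = e^{2f} · N² (e^c - 1) + e^f · N (e^{f + c} - 1)`.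
Since `(N - 1)^s N^{-s} → 1`, we get `N f → A + B` and `N² c → (1 - δ) A`; hence `f, c → 0`,
and linearising `e^x - 1 ≈ x` gives the limit `(1 - δ) A + (A + B)`.
-/

open Filter Topology

lemma tendsto_sub_one_rpow_mul_rpow_neg (s : ℝ) :
    Tendsto (fun N : ℝ => (N - 1) ^ s * N ^ (-s)) atTop (𝓝 1) := by
  have h_ratio : Tendsto (fun N : ℝ => 1 - N⁻¹) atTop (𝓝 1) := by
    simpa using (tendsto_const_nhds (x := (1 : ℝ))).sub (tendsto_inv_atTop_zero (𝕜 := ℝ))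
  have h_rpow : Tendsto (fun x : ℝ => x ^ s) (𝓝 1) (𝓝 1) := by
    simpa using (Real.continuousAt_rpow_const 1 s (Or.inl one_ne_zero)).tendsto
  refine (h_rpow.comp h_ratio).congr' ?_
  filter_upwards [eventually_gt_atTop (1 : ℝ)] with N hN
  have hN0 : 0 < N := one_pos.trans hN
  rw [Function.comp_apply, show 1 - N⁻¹ = (N - 1) / N by field_simp,
    Real.div_rpow (by linarith) hN0.le, Real.rpow_neg hN0.le, div_eq_mul_inv]

lemma tendsto_sub_one_rpow_mul_rpow {s u l : ℝ}
    (h : Tendsto (fun N : ℝ => N ^ (s + u)) atTop (𝓝 l)) :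
    Tendsto (fun N : ℝ => (N - 1) ^ s * N ^ u) atTop (𝓝 l) := by
  have h' := (tendsto_sub_one_rpow_mul_rpow_neg s).mul h
  rw [one_mul] at h'
  refine h'.congr' ?_
  filter_upwards [eventually_gt_atTop (0 : ℝ)] with N hN
  rw [mul_assoc, ← Real.rpow_add hN, neg_add_cancel_left]

lemma tendsto_zero_of_tendsto_id_mul {g : ℝ → ℝ} {L : ℝ}
    (h : Tendsto (fun x => x * g x) atTop (𝓝 L)) : Tendsto g atTop (𝓝 0) := by
  have h' := h.mul (tendsto_inv_atTop_zero (𝕜 := ℝ))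
  rw [mul_zero] at h'
  refine h'.congr' ?_
  filter_upwards [eventually_ne_atTop (0 : ℝ)] with x hx
  field_simp

lemma tendsto_mul_exp_sub_one {g p : ℝ → ℝ} {L : ℝ} (hg : Tendsto g atTop (𝓝 0))
    (hpg : Tendsto (fun x => p x * g x) atTop (𝓝 L)) :
    Tendsto (fun x => p x * (Real.exp (g x) - 1)) atTop (𝓝 L) := by
  have h_rem : Tendsto (fun x => p x * (Real.exp (g x) - 1 - g x)) atTop (𝓝 0) := by
    refine squeeze_zero_norm' (a := fun x => |p x * g x| * |g x|) ?_
      (by simpa using hpg.abs.mul hg.abs)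
    filter_upwards [hg.eventually (eventually_abs_sub_lt 0 one_pos)] with x hx
    rw [sub_zero] at hx
    calc ‖p x * (Real.exp (g x) - 1 - g x)‖ = |p x| * |Real.exp (g x) - 1 - g x| := abs_mul _ _
      _ ≤ |p x| * g x ^ 2 := by gcongr; exact Real.abs_exp_sub_one_sub_id_le hx.le
      _ = |p x * g x| * |g x| := by rw [abs_mul, sq, ← abs_mul_abs_self (g x)]; ring
  simpa [← mul_add] using hpg.add h_rem

section

variable (A B δ : ℝ)

/-- `D(N) = N * exp (delayExponent A B δ N)`. -/
noncomputable def delayExponent (N : ℝ) : ℝ :=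
  A * (N - 1) ^ (δ - 1) * N ^ (-δ) + B / N

/-- `Q(N) = exp (2 * delayExponent A B δ N + excessExponent A δ N)`. -/
noncomputable def excessExponent (N : ℝ) : ℝ :=
  A * (1 - δ) * N ^ (-δ) * (N - 1) ^ (δ - 2)

lemma tendsto_id_mul_delayExponent :
    Tendsto (fun N => N * delayExponent A B δ N) atTop (𝓝 (A + B)) := by
  have h : Tendsto (fun N : ℝ => (N - 1) ^ (δ - 1) * N ^ (1 - δ)) atTop (𝓝 1) :=
    tendsto_sub_one_rpow_mul_rpow (by simp)
  have h' := (h.const_mul A).add_const B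
  rw [mul_one] at h'
  refine h'.congr' ?_
  filter_upwards [eventually_gt_atTop (0 : ℝ)] with N hN
  rw [delayExponent, show 1 - δ = 1 + -δ by ring, Real.rpow_add hN, Real.rpow_one]
  field_simp

lemma tendsto_sq_mul_excessExponent :
    Tendsto (fun N => N * (N * excessExponent A δ N)) atTop (𝓝 (A * (1 - δ))) := by
  have h : Tendsto (fun N : ℝ => (N - 1) ^ (δ - 2) * N ^ (2 - δ)) atTop (𝓝 1) :=
    tendsto_sub_one_rpow_mul_rpow (by simp)
  have h' := h.const_mul (A * (1 - δ))
  rw [mul_one] at h'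
  refine h'.congr' ?_
  filter_upwards [eventually_gt_atTop (0 : ℝ)] with N hN
  rw [excessExponent, show 2 - δ = 1 + (1 + -δ) by ring, Real.rpow_add hN, Real.rpow_add hN,
    Real.rpow_one]
  ring

lemma qExponent_eq {N : ℝ} (hN : 1 < N) :
    2 * B / N + A * (2 * N - 1 - δ) * N ^ (-δ) * (N - 1) ^ (δ - 2) =
      2 * delayExponent A B δ N + excessExponent A δ N := by
  rw [delayExponent, excessExponent, show δ - 1 = δ - 2 + 1 by ring,
    Real.rpow_add_one (by linarith)]
  ring

end

lemma variance_decomposition (N f c : ℝ) :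
    N * (N + 1) * Real.exp (2 * f + c) - N * Real.exp f - (N * Real.exp f) ^ 2 =
      Real.exp f ^ 2 * (N * N * (Real.exp c - 1)) +
        Real.exp f * (N * (Real.exp (f + c) - 1)) := by
  rw [Real.exp_add, Real.exp_add, two_mul, Real.exp_add]
  ring

theorem fhma_variance_limit_general (δ A B : ℝ)
    (D Q V : ℝ → ℝ)
    (hD : ∀ N : ℝ, 1 < N →
      D N = N * Real.exp (A * (N - 1) ^ (δ - 1) * N ^ (-δ) + B / N))
    (hQ : ∀ N : ℝ, 1 < N →
      Q N = Real.exp (2 * B / N + A * (2 * N - 1 - δ) * N ^ (-δ) * (N - 1) ^ (δ - 2)))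
    (hV : ∀ N : ℝ, 1 < N → V N = N * (N + 1) * Q N - D N - (D N) ^ 2) :
    Tendsto V atTop (nhds ((2 - δ) * A + B)) := by
  have hNf := tendsto_id_mul_delayExponent A B δ
  have hNNc := tendsto_sq_mul_excessExponent A δ
  have hNc := tendsto_zero_of_tendsto_id_mul hNNc
  have hf := tendsto_zero_of_tendsto_id_mul hNf
  have hc := tendsto_zero_of_tendsto_id_mul hNc
  have h_exp : Tendsto (fun N => Real.exp (delayExponent A B δ N)) atTop (𝓝 1) := by
    simpa using hf.rexp
  have h_lin₁ := tendsto_mul_exp_sub_one hc (hNNc.congr fun N => (mul_assoc N N _).symm)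
  have h_lin₂ := tendsto_mul_exp_sub_one (by simpa using hf.add hc)
    (by simpa only [mul_add] using hNf.add hNc)
  have h_lim := ((h_exp.pow 2).mul h_lin₁).add (h_exp.mul h_lin₂)
  rw [show (1 : ℝ) ^ 2 * (A * (1 - δ)) + 1 * (A + B + 0) = (2 - δ) * A + B by ring] at h_lim
  refine h_lim.congr' ?_
  filter_upwards [eventually_gt_atTop (1 : ℝ)] with N hN
  rw [hV N hN, hQ N hN, hD N hN, qExponent_eq A B δ hN]
  exact (variance_decomposition _ _ _).symm

theorem fhma_variance_limit (δ A B : ℝ) (hδ : δ ∈ Set.Ioo (0:ℝ) 1)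
    (hA : 0 ≤ A) (hB : 0 ≤ B)
    (D Q V : ℝ → ℝ)
    (hD : ∀ N : ℝ, 1 < N →
      D N = N * Real.exp (A * (N - 1) ^ (δ - 1) * N ^ (-δ) + B / N))
    (hQ : ∀ N : ℝ, 1 < N →
      Q N = Real.exp (2 * B / N + A * (2 * N - 1 - δ) * N ^ (-δ) * (N - 1) ^ (δ - 2)))
    (hV : ∀ N : ℝ, 1 < N → V N = N * (N + 1) * Q N - D N - (D N) ^ 2) :
    Tendsto V atTop (nhds ((2 - δ) * A + B)) :=
  fhma_variance_limit_general δ A B D Q V hD hQ hV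
end

section
/- For δ ∈ (0,1), A > 0, B ≥ 0, let p = 1/N with N > 1, define D̃(p) = (1/p)·exp(pA/(1-p)^{1-δ} + B) and Ṽ(p) = (2/p²)·exp((2-p-δp)pA/(1-p)^{2-δ} + 2B) - D̃(p) - D̃(p)². Then Ṽ(1/N)/N² converges, as N → ∞, to the positive constant 2e^{2B} - e^{2B} = e^{2B}, i.e., Ṽ(1/N) = Θ(N²). -/
/-!
Multiplying by `p ^ 2`, the variance becomes
`2 exp (e₂(p) + 2B) - p exp (e₁(p) + B) - exp (e₁(p) + B) ^ 2`, where the exponents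
`e₁(p) = p A / (1 - p) ^ (1 - δ)` and `e₂(p) = (2 - p - δ p) p A / (1 - p) ^ (2 - δ)` are continuous
at `p = 0` and vanish there. Letting `p = 1 / N → 0` gives the limit `2 e^{2B} - e^{2B} = e^{2B}`.
-/

open Filter Topology Real

theorem ContinuousAt.tendsto_comp_one_div_atTop {X : Type*} [TopologicalSpace X] {f : ℝ → X}
    (hf : ContinuousAt f 0) : Tendsto (fun N : ℝ => f (1 / N)) atTop (𝓝 (f 0)) := by
  simp only [one_div]
  exact hf.tendsto.comp tendsto_inv_atTop_zero

/-- `p ^ 2` times the ALOHA local-delay variance `Ṽ(p)`. -/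
noncomputable def scaledAlohaVariance (δ A B p : ℝ) : ℝ :=
  2 * exp ((2 - p - δ * p) * p * A / (1 - p) ^ (2 - δ) + 2 * B)
    - p * exp (p * A / (1 - p) ^ (1 - δ) + B) - exp (p * A / (1 - p) ^ (1 - δ) + B) ^ 2

theorem continuousAt_scaledAlohaVariance_zero (δ A B : ℝ) :
    ContinuousAt (scaledAlohaVariance δ A B) 0 := by
  unfold scaledAlohaVariance
  fun_prop (disch := norm_num)

theorem scaledAlohaVariance_zero (δ A B : ℝ) : scaledAlohaVariance δ A B 0 = exp (2 * B) := by
  simp only [scaledAlohaVariance, mul_zero, zero_mul, zero_div, zero_add, sub_zero, ← exp_nat_mul]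
  push_cast
  ring

theorem sq_mul_eq_scaledAlohaVariance {δ A B p : ℝ} {D V : ℝ → ℝ} (hp : 0 < p)
    (hD : D p = (1 / p) * exp (p * A / (1 - p) ^ (1 - δ) + B))
    (hV : V p = (2 / p ^ 2) * exp ((2 - p - δ * p) * p * A / (1 - p) ^ (2 - δ) + 2 * B)
        - D p - (D p) ^ 2) :
    p ^ 2 * V p = scaledAlohaVariance δ A B p := by
  rw [hV, hD, scaledAlohaVariance]
  field_simp

theorem aloha_variance_quadratic_general (δ A B : ℝ)
    (D V : ℝ → ℝ)
    (hD : ∀ p : ℝ, 0 < p → p < 1 →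
      D p = (1 / p) * Real.exp (p * A / (1 - p) ^ (1 - δ) + B))
    (hV : ∀ p : ℝ, 0 < p → p < 1 →
      V p = (2 / p ^ 2) * Real.exp ((2 - p - δ * p) * p * A / (1 - p) ^ (2 - δ) + 2 * B)
        - D p - (D p) ^ 2) :
    Tendsto (fun N : ℝ => V (1 / N) / N ^ 2) atTop (nhds (Real.exp (2 * B))) := by
  have hlim := (continuousAt_scaledAlohaVariance_zero δ A B).tendsto_comp_one_div_atTop
  rw [scaledAlohaVariance_zero] at hlim
  refine hlim.congr' ?_
  filter_upwards [eventually_gt_atTop 1] with N hN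
  have hp₀ : 0 < 1 / N := by positivity
  have hp₁ : 1 / N < 1 := (div_lt_one (by positivity)).2 hN
  rw [← sq_mul_eq_scaledAlohaVariance hp₀ (hD _ hp₀ hp₁) (hV _ hp₀ hp₁), div_pow, one_pow,
    one_div_mul_eq_div]

theorem aloha_variance_quadratic (δ A B : ℝ) (hδ : δ ∈ Set.Ioo (0:ℝ) 1)
    (hA : 0 < A) (hB : 0 ≤ B)
    (D V : ℝ → ℝ)
    (hD : ∀ p : ℝ, 0 < p → p < 1 →
      D p = (1 / p) * Real.exp (p * A / (1 - p) ^ (1 - δ) + B))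
    (hV : ∀ p : ℝ, 0 < p → p < 1 →
      V p = (2 / p ^ 2) * Real.exp ((2 - p - δ * p) * p * A / (1 - p) ^ (2 - δ) + 2 * B)
        - D p - (D p) ^ 2) :
    Tendsto (fun N : ℝ => V (1 / N) / N ^ 2) atTop (nhds (Real.exp (2 * B))) :=
  aloha_variance_quadratic_general δ A B D V hD hV
end

section
/- For δ ∈ (0,1), A > 0, B ≥ 0, define f(N) = 1 - (1/N)·(A·(N/(N-1))^{1-δ}·((N-δ)/(N-1)) + B) for real N > 1. Then f is strictly monotonically increasing on (1, ∞), f(N) → -∞ as N → 1+, and f(N) → 1 as N → ∞; hence f has a unique zero N_opt in (1, ∞). -/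
/-!
Write `f N = 1 - P N / N` with `P N = A (N/(N-1))^(1-δ) (N-δ)/(N-1) + B`; this `f` is
`N · (log D)'(N)`. Since `(N - d)/(N - 1) = 1 + (1 - d)/(N - 1)`, for `d < 1` this ratio is positive
and strictly decreasing on `(1, ∞)`, blows up as `N → 1⁺` and tends to `1` as `N → ∞`. Applied with
`d = 0` and `d = δ`, it makes every factor of `P N / N` positive and strictly decreasing, so `f`
strictly increases from `-∞` (near `1`) to `1` (at `∞`), and by continuity it crosses `0` exactly once.
-/

open Filter Set Topology

theorem StrictAntiOn.mul_antitoneOn_of_nonneg_of_pos {α R : Type*} [Preorder α] [Mul R] [Zero R]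
    [Preorder R] [PosMulMono R] [MulPosStrictMono R] {f g : α → R} {s : Set α}
    (hf : StrictAntiOn f s) (hg : AntitoneOn g s) (hf₀ : ∀ x ∈ s, 0 ≤ f x)
    (hg₀ : ∀ x ∈ s, 0 < g x) : StrictAntiOn (fun x ↦ f x * g x) s := fun x hx y hy hxy ↦
  calc f y * g y ≤ f y * g x := mul_le_mul_of_nonneg_left (hg hx hy hxy.le) (hf₀ y hy)
    _ < f x * g x := mul_lt_mul_of_pos_right (hf hx hy hxy) (hg₀ x hx)

theorem StrictMonoOn.existsUnique_eq_of_tendsto {α β : Type*} [ConditionallyCompleteLinearOrder α]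
    [DenselyOrdered α] [NoMaxOrder α] [TopologicalSpace α] [OrderTopology α]
    [LinearOrder β] [TopologicalSpace β] [OrderClosedTopology β] {f : α → β} {a : α} {c y : β}
    (hmono : StrictMonoOn f (Ioi a)) (hcont : ContinuousOn f (Ioi a))
    (hbot : Tendsto f (𝓝[>] a) atBot) (htop : Tendsto f atTop (𝓝 c)) (hy : y < c) :
    ∃! x, a < x ∧ f x = y := by
  obtain ⟨x, hx, rfl⟩ : y ∈ f '' Ioi a :=
    isPreconnected_Ioi.intermediate_value_Iio (l₁ := 𝓝[>] a) inf_le_right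
      (le_principal_iff.2 (Ioi_mem_atTop a)) hcont hbot htop hy
  exact ⟨x, ⟨hx, rfl⟩, fun x' hx' ↦ hmono.injOn hx'.1 hx hx'.2⟩

section SubDivSubOne

variable {K : Type*} [Field K] [LinearOrder K] [IsStrictOrderedRing K]

theorem sub_div_sub_one_pos {d x : K} (hd : d < 1) (hx : 1 < x) : 0 < (x - d) / (x - 1) :=
  div_pos (by linarith) (by linarith)

theorem strictAntiOn_sub_div_sub_one {d : K} (hd : d < 1) :
    StrictAntiOn (fun x : K ↦ (x - d) / (x - 1)) (Ioi 1) := by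
  intro x (hx : 1 < x) y (hy : 1 < y) hxy
  rw [div_lt_div_iff₀ (by linarith) (by linarith)]
  nlinarith

end SubDivSubOne

theorem tendsto_sub_div_sub_one_nhdsGT_one {d : ℝ} (hd : d < 1) :
    Tendsto (fun x : ℝ ↦ (x - d) / (x - 1)) (𝓝[>] 1) atTop := by
  have hden : Tendsto (fun x : ℝ ↦ x - 1) (𝓝[>] 1) (𝓝[>] 0) := by
    refine tendsto_nhdsWithin_of_tendsto_nhds_of_eventually_within _ ?_ ?_
    · simpa using ((continuous_sub_right (1 : ℝ)).tendsto 1).mono_left nhdsWithin_le_nhds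
    · filter_upwards [self_mem_nhdsWithin] with x (hx : 1 < x)
      exact sub_pos.2 hx
  have hnum : Tendsto (fun x : ℝ ↦ x - d) (𝓝[>] 1) (𝓝 (1 - d)) :=
    ((continuous_sub_right d).tendsto 1).mono_left nhdsWithin_le_nhds
  simp only [div_eq_mul_inv]
  exact hnum.pos_mul_atTop (sub_pos.2 hd) (tendsto_inv_nhdsGT_zero.comp hden)

theorem tendsto_sub_div_sub_one_atTop (d : ℝ) :
    Tendsto (fun x : ℝ ↦ (x - d) / (x - 1)) atTop (𝓝 1) := by
  have hinv : Tendsto (fun x : ℝ ↦ (x - 1)⁻¹) atTop (𝓝 0) :=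
    tendsto_inv_atTop_zero.comp (tendsto_atTop_add_const_right _ (-1) tendsto_id)
  have h := (hinv.const_mul (1 - d)).const_add 1
  rw [mul_zero, add_zero] at h
  refine h.congr' ?_
  filter_upwards [eventually_gt_atTop 1] with x hx
  field_simp [(sub_pos.2 hx).ne']
  ring

noncomputable def fhmaPenalty (δ A B N : ℝ) : ℝ :=
  A * (N / (N - 1)) ^ (1 - δ) * ((N - δ) / (N - 1)) + B

noncomputable def fhmaFOC (δ A B N : ℝ) : ℝ := 1 - (1 / N) * fhmaPenalty δ A B N

section FHMA

variable {δ A B : ℝ}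

theorem fhmaPenalty_pos (hδ : δ < 1) (hA : 0 < A) (hB : 0 ≤ B) {N : ℝ} (hN : 1 < N) :
    0 < fhmaPenalty δ A B N := by
  have hbase : 0 < N / (N - 1) := div_pos (by linarith) (by linarith)
  have hratio := sub_div_sub_one_pos hδ hN
  unfold fhmaPenalty
  positivity

theorem strictAntiOn_fhmaPenalty (hδ : δ < 1) (hA : 0 < A) :
    StrictAntiOn (fhmaPenalty δ A B) (Ioi 1) := by
  have hbase : StrictAntiOn (fun N : ℝ ↦ N / (N - 1)) (Ioi 1) := by
    simpa using strictAntiOn_sub_div_sub_one (zero_lt_one' ℝ)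
  have hpow : StrictAntiOn (fun N : ℝ ↦ A * (N / (N - 1)) ^ (1 - δ)) (Ioi 1) :=
    fun x hx y (hy : 1 < y) hxy ↦ mul_lt_mul_of_pos_left
      (Real.rpow_lt_rpow (div_pos (by linarith) (by linarith)).le (hbase hx hy hxy)
        (sub_pos.2 hδ)) hA
  have hprod := hpow.mul_antitoneOn_of_nonneg_of_pos (strictAntiOn_sub_div_sub_one hδ).antitoneOn
    (fun x (hx : 1 < x) ↦ by
      have : 0 < x / (x - 1) := div_pos (by linarith) (by linarith)
      positivity)
    (fun x hx ↦ sub_div_sub_one_pos hδ hx)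
  exact fun x hx y hy hxy ↦ add_lt_add_of_lt_of_le (hprod hx hy hxy) le_rfl

theorem strictMonoOn_fhmaFOC (hδ : δ < 1) (hA : 0 < A) (hB : 0 ≤ B) :
    StrictMonoOn (fhmaFOC δ A B) (Ioi 1) := by
  have hinv : StrictAntiOn (fun N : ℝ ↦ 1 / N) (Ioi 1) := fun x (hx : 1 < x) _ _ hxy ↦
    one_div_lt_one_div_of_lt (by linarith) hxy
  have hprod := hinv.mul_antitoneOn_of_nonneg_of_pos (strictAntiOn_fhmaPenalty hδ hA).antitoneOn
    (fun x (hx : 1 < x) ↦ by positivity) (fun x hx ↦ fhmaPenalty_pos hδ hA hB hx)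
  exact fun x hx y hy hxy ↦ sub_lt_sub_left (hprod hx hy hxy) 1

theorem continuousOn_fhmaFOC (hδ : δ < 1) : ContinuousOn (fhmaFOC δ A B) (Ioi 1) := by
  have : 0 ≤ 1 - δ := by linarith
  unfold fhmaFOC fhmaPenalty
  fun_prop (disch := intros; simp_all; linarith)

theorem tendsto_fhmaPenalty_nhdsGT_one (hδ : δ < 1) (hA : 0 < A) :
    Tendsto (fhmaPenalty δ A B) (𝓝[>] 1) atTop := by
  have hpow : Tendsto (fun N : ℝ ↦ (N / (N - 1)) ^ (1 - δ)) (𝓝[>] 1) atTop :=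
    (tendsto_rpow_atTop (sub_pos.2 hδ)).comp
      (by simpa using tendsto_sub_div_sub_one_nhdsGT_one zero_lt_one)
  exact tendsto_atTop_add_const_right _ B
    ((hpow.const_mul_atTop hA).atTop_mul_atTop₀ (tendsto_sub_div_sub_one_nhdsGT_one hδ))

theorem tendsto_fhmaFOC_nhdsGT_one (hδ : δ < 1) (hA : 0 < A) :
    Tendsto (fhmaFOC δ A B) (𝓝[>] 1) atBot := by
  have hinv : Tendsto (fun N : ℝ ↦ 1 / N) (𝓝[>] 1) (𝓝 1) := by
    simpa only [one_div, inv_one] using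
      (tendsto_inv₀ (one_ne_zero' ℝ)).mono_left nhdsWithin_le_nhds
  have h := tendsto_atBot_add_const_left _ 1 <| tendsto_neg_atBot_iff.2 <|
    hinv.pos_mul_atTop one_pos (tendsto_fhmaPenalty_nhdsGT_one (B := B) hδ hA)
  simp only [← sub_eq_add_neg] at h
  exact h

theorem tendsto_fhmaPenalty_atTop (δ A B : ℝ) :
    Tendsto (fhmaPenalty δ A B) atTop (𝓝 (A + B)) := by
  have hpow : Tendsto (fun N : ℝ ↦ (N / (N - 1)) ^ (1 - δ)) atTop (𝓝 1) := by
    simpa using (tendsto_sub_div_sub_one_atTop 0).rpow_const (Or.inl one_ne_zero) (p := 1 - δ)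
  have h := ((hpow.const_mul A).mul (tendsto_sub_div_sub_one_atTop δ)).add_const B
  rwa [mul_one, mul_one] at h

theorem tendsto_fhmaFOC_atTop (δ A B : ℝ) : Tendsto (fhmaFOC δ A B) atTop (𝓝 1) := by
  have h := (tendsto_inv_atTop_zero.mul (tendsto_fhmaPenalty_atTop δ A B)).const_sub 1
  rw [zero_mul, sub_zero] at h
  show Tendsto (fun N ↦ 1 - 1 / N * fhmaPenalty δ A B N) atTop (𝓝 1)
  simpa only [one_div] using h

end FHMA

theorem fhma_first_order_condition (δ A B : ℝ) (hδ : δ ∈ Set.Ioo (0:ℝ) 1)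
    (hA : 0 < A) (hB : 0 ≤ B)
    (f : ℝ → ℝ)
    (hf : ∀ N : ℝ, 1 < N →
      f N = 1 - (1 / N) * (A * (N / (N - 1)) ^ (1 - δ) * ((N - δ) / (N - 1)) + B)) :
    StrictMonoOn f (Set.Ioi (1 : ℝ)) ∧
    Tendsto f (nhdsWithin 1 (Set.Ioi 1)) atBot ∧
    Tendsto f atTop (nhds 1) ∧
    ∃! N : ℝ, 1 < N ∧ f N = 0 := by
  have hfeq : EqOn (fhmaFOC δ A B) f (Ioi 1) := fun N hN ↦ (hf N hN).symm
  have hmono := (strictMonoOn_fhmaFOC hδ.2 hA hB).congr hfeq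
  have hbot : Tendsto f (𝓝[>] 1) atBot :=
    (tendsto_fhmaFOC_nhdsGT_one hδ.2 hA).congr' (eventuallyEq_nhdsWithin_of_eqOn hfeq)
  have htop : Tendsto f atTop (𝓝 1) :=
    (tendsto_fhmaFOC_atTop δ A B).congr' (hfeq.eventuallyEq_of_mem (Ioi_mem_atTop 1))
  exact ⟨hmono, hbot, htop, hmono.existsUnique_eq_of_tendsto
    ((continuousOn_fhmaFOC hδ.2).congr hfeq.symm) hbot htop one_pos⟩
end

section
/- Let δ ∈ (0,1), A > 0, B ≥ 0, and suppose N > 1 satisfies N = A·(N/(N-1))^{2-δ}·((N-δ)/N) + B. Then A + B < N < A + B + 2. -/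
/-!
Write the stationarity equation as `N - B = A * f δ N` with
`f δ N = (N / (N - 1)) ^ (2 - δ) * ((N - δ) / N)`.
Since `N / (N - 1) > 1` and `1 < 2 - δ < 2`, the power lies strictly between `N / (N - 1)` and
`(N / (N - 1)) ^ 2`. The first comparison gives `f δ N > (N - δ) / (N - 1) > 1`, hence `N - B > A`;
the second gives `f δ N * (N - 2) < N`, i.e. `(N - B) (N - 2) < A N`, which rearranges to
`N < A + B + 2 - 2 B / N`.
-/

noncomputable def optimalityFactor (δ N : ℝ) : ℝ :=
  (N / (N - 1)) ^ (2 - δ) * ((N - δ) / N)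

lemma one_lt_div_sub_one {N : ℝ} (hN : 1 < N) : 1 < N / (N - 1) := by
  rw [one_lt_div (by linarith)]; linarith

lemma sq_div_sub_one_mul_sub_two_lt {N : ℝ} (hN : 1 < N) : (N / (N - 1)) ^ 2 * (N - 2) < N := by
  rcases le_or_gt N 2 with hN2 | hN2
  · nlinarith [sq_nonneg (N / (N - 1))]
  · rw [div_pow, div_mul_eq_mul_div, div_lt_iff₀ (by nlinarith)]
    nlinarith

lemma one_lt_optimalityFactor {δ N : ℝ} (hδ : δ < 1) (hN : 1 < N) : 1 < optimalityFactor δ N := by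
  have hb := one_lt_div_sub_one hN
  have hpow : N / (N - 1) < (N / (N - 1)) ^ (2 - δ) := by
    simpa using Real.rpow_lt_rpow_of_exponent_lt hb (show (1 : ℝ) < 2 - δ by linarith)
  have hr : 0 < (N - δ) / N := div_pos (by linarith) (by linarith)
  calc 1 < (N - δ) / (N - 1) := by rw [one_lt_div (by linarith)]; linarith
    _ = N / (N - 1) * ((N - δ) / N) := by field_simp
    _ < optimalityFactor δ N := mul_lt_mul_of_pos_right hpow hr

lemma optimalityFactor_mul_sub_two_lt {δ N : ℝ} (hδ0 : 0 ≤ δ) (hδN : δ < N) (hN : 1 < N) :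
    optimalityFactor δ N * (N - 2) < N := by
  have hb := one_lt_div_sub_one hN
  have hf : 0 < optimalityFactor δ N :=
    mul_pos (Real.rpow_pos_of_pos (by linarith) _) (div_pos (by linarith) (by linarith))
  rcases le_or_gt N 2 with hN2 | hN2
  · nlinarith
  have hpow : (N / (N - 1)) ^ (2 - δ) ≤ (N / (N - 1)) ^ 2 := by
    simpa using Real.rpow_le_rpow_of_exponent_le hb.le (show 2 - δ ≤ (2 : ℝ) by linarith)
  have hr : (N - δ) / N ≤ 1 := by rw [div_le_one (by linarith)]; linarith
  have hfb : optimalityFactor δ N ≤ (N / (N - 1)) ^ 2 :=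
    (mul_le_of_le_one_right (by positivity) hr).trans hpow
  nlinarith [sq_div_sub_one_mul_sub_two_lt hN]

theorem fhma_Nopt_bounds (δ A B N : ℝ) (hδ : δ ∈ Set.Ioo (0:ℝ) 1)
    (hA : 0 < A) (hB : 0 ≤ B) (hN : 1 < N)
    (hopt : N = A * (N / (N - 1)) ^ (2 - δ) * ((N - δ) / N) + B) :
    A + B < N ∧ N < A + B + 2 := by
  obtain ⟨hδ0, hδ1⟩ := hδ
  have hfac : N - B = A * optimalityFactor δ N := by
    rw [optimalityFactor]; linarith
  have hlow := mul_lt_mul_of_pos_left (one_lt_optimalityFactor hδ1 hN) hA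
  have hup := mul_lt_mul_of_pos_left
    (optimalityFactor_mul_sub_two_lt hδ0.le (by linarith) hN) hA
  rw [← mul_assoc, ← hfac] at hup
  have hgap : N * (N - (A + B + 2)) < 0 := by nlinarith
  exact ⟨by linarith, by linarith [neg_of_mul_neg_right hgap (by linarith)]⟩
end

section
/- For δ ∈ (0,1), the function l(θ) = θ^{δ-1}(1+θ)ln(1+θ) is strictly increasing on (0, ∞). -/
/-!
Writing `θ ^ (δ - 1) = θ ^ δ / θ`, the function is `θ ^ δ * ((1 + θ) log (1 + θ) / θ)`. The first
factor is positive and nondecreasing since `δ ≥ 0`. The second is the slope of the secant of the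
strictly convex function `x ↦ x log x` between `1` (where it vanishes) and `1 + θ`, so it is
positive and strictly increasing in `θ`.
-/

open Real Set

theorem MonotoneOn.mul_strictMonoOn_of_pos_of_nonneg {α R : Type*} [Preorder α] [MulZeroClass R]
    [Preorder R] [PosMulStrictMono R] [MulPosMono R] {f g : α → R} {s : Set α}
    (hf : MonotoneOn f s) (hg : StrictMonoOn g s) (hf0 : ∀ x ∈ s, 0 < f x)
    (hg0 : ∀ x ∈ s, 0 ≤ g x) : StrictMonoOn (fun x => f x * g x) s :=
  fun a ha b hb hab =>
    calc f a * g a ≤ f b * g a := mul_le_mul_of_nonneg_right (hf ha hb hab.le) (hg0 a ha)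
      _ < f b * g b := mul_lt_mul_of_pos_left (hg ha hb hab) (hf0 b hb)

theorem Real.strictMonoOn_one_add_mul_log_one_add_div :
    StrictMonoOn (fun θ : ℝ => (1 + θ) * log (1 + θ) / θ) (Ioi 0) := by
  intro a ha b hb hab
  have hmem : ∀ θ ∈ Ioi (0 : ℝ), 1 + θ ∈ Ici (0 : ℝ) := fun θ hθ => by
    simp only [mem_Ici]; linarith [mem_Ioi.mp hθ]
  have hne : ∀ θ ∈ Ioi (0 : ℝ), 1 + θ ≠ 1 := fun θ hθ => by
    linarith [mem_Ioi.mp hθ]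
  simpa using strictConvexOn_mul_log.secant_strict_mono (a := 1) (by simp)
    (hmem a ha) (hmem b hb) (hne a ha) (hne b hb) (by linarith)

theorem Real.one_add_mul_log_one_add_div_nonneg {θ : ℝ} (hθ : 0 < θ) :
    0 ≤ (1 + θ) * log (1 + θ) / θ :=
  div_nonneg (mul_nonneg (by linarith) (log_nonneg (by linarith))) hθ.le

theorem l_strict_mono (δ : ℝ) (hδ : δ ∈ Set.Ioo (0:ℝ) 1) :
    StrictMonoOn (fun θ : ℝ => θ ^ (δ - 1) * (1 + θ) * Real.log (1 + θ))
      (Set.Ioi (0 : ℝ)) := by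
  have hrpow : MonotoneOn (fun θ : ℝ => θ ^ δ) (Ioi 0) :=
    (monotoneOn_rpow_Ici_of_exponent_nonneg hδ.1.le).mono Ioi_subset_Ici_self
  have hprod := hrpow.mul_strictMonoOn_of_pos_of_nonneg strictMonoOn_one_add_mul_log_one_add_div
    (fun θ hθ => rpow_pos_of_pos hθ δ) (fun θ hθ => one_add_mul_log_one_add_div_nonneg hθ)
  refine hprod.congr fun θ hθ => ?_
  rw [rpow_sub_one (ne_of_gt hθ)]
  ring
end

section
/- Let δ ∈ (0,1) and b_0 > 0, and suppose θ > 0 satisfies b_0 = 1/(θ^{δ-1}(1+θ)ln(1+θ)), i.e., θ^{δ-1}(1+θ)ln(1+θ) = 1/b_0. Then b_0^{-1/(δ+1)} - 1 < θ < b_0^{-1/δ}. -/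
/-!
Write `F(θ) = θ^(δ-1) (1+θ) log(1+θ)`. The bounds `θ/(1+θ) < log(1+θ) < θ` squeeze `F(θ)`
strictly between `θ^δ` and `θ^δ (1+θ) ≤ (1+θ)^(δ+1)`. Since `F(θ) = b₀⁻¹`, taking `δ`-th and
`(δ+1)`-th roots gives the two bounds on `θ`.
-/

open Real

namespace Real

lemma div_one_add_lt_log_one_add {x : ℝ} (hx : 0 < x) : x / (1 + x) < log (1 + x) :=
  calc x / (1 + x) ≤ 2 * x / (x + 2) := by
        rw [div_le_div_iff₀ (by positivity) (by positivity)]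
        nlinarith
    _ < log (1 + x) := lt_log_one_add_of_pos hx

lemma log_one_add_lt {x : ℝ} (hx : 0 < x) : log (1 + x) < x := by
  linarith [log_lt_sub_one_of_pos (by positivity : 0 < 1 + x) (by linarith : 1 + x ≠ 1)]

lemma rpow_lt_rpow_sub_one_mul_log_one_add {θ : ℝ} (hθ : 0 < θ) (δ : ℝ) :
    θ ^ δ < θ ^ (δ - 1) * (1 + θ) * log (1 + θ) :=
  calc θ ^ δ = θ ^ (δ - 1) * (1 + θ) * (θ / (1 + θ)) := by
        rw [rpow_sub_one hθ.ne']
        field_simp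
    _ < θ ^ (δ - 1) * (1 + θ) * log (1 + θ) := by
        gcongr
        exact div_one_add_lt_log_one_add hθ

lemma rpow_sub_one_mul_log_one_add_lt {θ δ : ℝ} (hθ : 0 < θ) (hδ : 0 ≤ δ) :
    θ ^ (δ - 1) * (1 + θ) * log (1 + θ) < (1 + θ) ^ (δ + 1) :=
  calc θ ^ (δ - 1) * (1 + θ) * log (1 + θ) < θ ^ (δ - 1) * (1 + θ) * θ := by
        gcongr
        exact log_one_add_lt hθ
    _ = θ ^ δ * (1 + θ) := by
        rw [rpow_sub_one hθ.ne']
        field_simp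
    _ ≤ (1 + θ) ^ δ * (1 + θ) := by
        gcongr
        linarith
    _ = (1 + θ) ^ (δ + 1) := (rpow_add_one (by positivity) δ).symm

end Real

theorem theta_opt_bounds (δ b₀ θ : ℝ) (hδ : δ ∈ Set.Ioo (0:ℝ) 1)
    (hb : 0 < b₀) (hθ : 0 < θ)
    (hopt : θ ^ (δ - 1) * (1 + θ) * Real.log (1 + θ) = 1 / b₀) :
    b₀ ^ (-(1 / (δ + 1))) - 1 < θ ∧ θ < b₀ ^ (-(1 / δ)) := by
  have hδ₀ : 0 < δ := hδ.1
  have hlower := rpow_lt_rpow_sub_one_mul_log_one_add hθ δ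
  have hupper := rpow_sub_one_mul_log_one_add_lt hθ hδ₀.le
  rw [hopt, one_div] at hlower hupper
  simp only [one_div, rpow_neg hb.le, ← inv_rpow hb.le]
  constructor
  · rw [sub_lt_iff_lt_add', rpow_inv_lt_iff_of_pos (by positivity) (by positivity) (by positivity)]
    exact hupper
  · rwa [lt_rpow_inv_iff_of_pos hθ.le (by positivity) hδ₀]
end

section
/- For δ ∈ (0,1), N > 1 real, and θ, r_0, α > 0 with δ = d/α and d ≥ 1, the integral d·∫_0^∞ (1 - N²(1+θ r_0^α r^{-α})²/(N + (N-1)θ r_0^α r^{-α})²)·r^{d-1} dr equals -r_0^d θ^δ C(δ)(2N-1-δ)·N^{-δ}(N-1)^{δ-2}, where C(δ) = Γ(1+δ)Γ(1-δ). -/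
/-!
With `κ = θ r₀^α (N - 1) / N`, the integrand is `g(κ r^{-α}) r^{d-1}` for
`g s = 1 - (1 + N s / (N - 1))² / (1 + s)²` (`pgflKernel N`). The substitution
`t = κ r^{-α}` turns the integral into `κ^δ / α · ∫₀^∞ g(t) t^{-δ-1} dt`, and `t = 1/y - 1`
maps this onto `(0, 1)`, where `g(1/y - 1) = -(1 - y)(2N - 1 - y)/(N - 1)²`. What remains is
`∫₀¹ (2N - 1 - y) y^{δ-1} (1 - y)^{-δ} dy = (2N - 1 - δ) B(δ, 1 - δ)`, and
`δ B(δ, 1 - δ) = Γ(1 + δ) Γ(1 - δ)`.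
-/

open Real MeasureTheory Set

noncomputable def pgflKernel (N s : ℝ) : ℝ := 1 - (1 + N / (N - 1) * s) ^ 2 / (1 + s) ^ 2

theorem integral_Ioi_comp_mul_rpow_neg {E : Type*} [NormedAddCommGroup E] [NormedSpace ℝ E]
    (g : ℝ → E) {a α : ℝ} (ha : 0 < a) (hα : 0 < α) (d : ℝ) :
    ∫ r in Ioi 0, r ^ (d - 1) • g (a * r ^ (-α)) =
      (a ^ (d / α) / α) • ∫ t in Ioi 0, t ^ (-(d / α) - 1) • g t := by
  have hsubst := integral_comp_rpow_Ioi (fun t => t ^ (-(d / α) - 1) • g (a * t))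
    (neg_ne_zero.2 hα.ne')
  have hscale := integral_comp_mul_left_Ioi (fun u => (u / a) ^ (-(d / α) - 1) • g u) 0 ha
  simp only [mul_zero, mul_div_cancel_left₀ _ ha.ne'] at hscale
  calc ∫ r in Ioi 0, r ^ (d - 1) • g (a * r ^ (-α))
      = α⁻¹ • ∫ r in Ioi 0,
          (|(-α)| * r ^ (-α - 1)) • (r ^ (-α)) ^ (-(d / α) - 1) • g (a * r ^ (-α)) := by
        rw [← integral_smul]
        refine setIntegral_congr_fun measurableSet_Ioi fun r (hr : 0 < r) => ?_
        rw [smul_smul, smul_smul, ← rpow_mul hr.le, abs_neg, abs_of_pos hα,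
          inv_mul_cancel_left₀ hα.ne', ← rpow_add hr]
        congr 2
        field_simp
        ring
    _ = α⁻¹ • a⁻¹ • (a ^ (-(d / α) - 1))⁻¹ •
          ∫ t in Ioi 0, t ^ (-(d / α) - 1) • g t := by
        rw [hsubst, hscale, ← integral_smul (a ^ (-(d / α) - 1))⁻¹]
        congr 2
        refine setIntegral_congr_fun measurableSet_Ioi fun t (ht : 0 < t) => ?_
        rw [div_rpow ht.le ha.le, smul_smul, div_eq_inv_mul]
    _ = (a ^ (d / α) / α) • ∫ t in Ioi 0, t ^ (-(d / α) - 1) • g t := by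
        rw [smul_smul, smul_smul, ← rpow_neg ha.le, show -(-(d / α) - 1) = d / α + 1 by ring,
          rpow_add_one ha.ne']
        congr 1
        field_simp

theorem integral_Ioi_eq_integral_Ioo_inv_sub_one {E : Type*} [NormedAddCommGroup E]
    [NormedSpace ℝ E] (f : ℝ → E) :
    ∫ s in Ioi 0, f s = ∫ y in Ioo 0 1, (y ^ 2)⁻¹ • f (y⁻¹ - 1) := by
  have himage : (fun y : ℝ => y⁻¹ - 1) '' Ioo 0 1 = Ioi 0 := by
    ext s
    refine ⟨?_, fun (hs : 0 < s) =>
      ⟨(1 + s)⁻¹, ⟨by positivity, inv_lt_one_of_one_lt₀ (by linarith)⟩, by simp⟩⟩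
    rintro ⟨y, ⟨hy0, hy1⟩, rfl⟩
    simpa using (one_lt_inv₀ hy0).2 hy1
  have hderiv : ∀ y ∈ Ioo (0 : ℝ) 1,
      HasDerivWithinAt (fun y : ℝ => y⁻¹ - 1) (-(y ^ 2)⁻¹) (Ioo 0 1) y :=
    fun y hy => ((hasDerivAt_inv hy.1.ne').sub_const 1).hasDerivWithinAt
  have hinj : InjOn (fun y : ℝ => y⁻¹ - 1) (Ioo 0 1) := fun y _ z _ h =>
    inv_injective (sub_left_injective h)
  rw [← himage, integral_image_eq_integral_abs_deriv_smul measurableSet_Ioo hderiv hinj]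
  exact setIntegral_congr_fun measurableSet_Ioo fun y hy => by simp [abs_of_pos hy.1]

theorem integrableOn_Ioo_rpow_mul_one_sub_rpow {a b : ℝ} (ha : 0 < a) (hb : 0 < b) :
    IntegrableOn (fun y : ℝ => y ^ (a - 1) * (1 - y) ^ (b - 1)) (Ioo 0 1) := by
  have h := (Complex.betaIntegral_convergent (u := a) (v := b) (by simpa) (by simpa)).norm
  rw [intervalIntegrable_iff_integrableOn_Ioc_of_le zero_le_one] at h
  refine (h.mono_set Ioo_subset_Ioc_self).congr_fun (fun y ⟨hy0, hy1⟩ => ?_) measurableSet_Ioo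
  dsimp only
  rw [norm_mul, show (1 : ℂ) - y = ((1 - y : ℝ) : ℂ) by push_cast; ring,
    Complex.norm_cpow_eq_rpow_re_of_pos hy0, Complex.norm_cpow_eq_rpow_re_of_pos (sub_pos.2 hy1)]
  simp

theorem integral_Ioo_rpow_mul_one_sub_rpow {a b : ℝ} (ha : 0 < a) (hb : 0 < b) :
    ∫ y in Ioo 0 1, y ^ (a - 1) * (1 - y) ^ (b - 1) = ProbabilityTheory.beta a b := by
  rw [ProbabilityTheory.beta_eq_betaIntegralReal a b ha hb, Complex.betaIntegral,
    intervalIntegral.integral_of_le zero_le_one, integral_Ioc_eq_integral_Ioo,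
    ← RCLike.re_to_complex, ← integral_re]
  · refine setIntegral_congr_fun measurableSet_Ioo fun y ⟨hy0, hy1⟩ => ?_
    norm_cast
    rw [← Complex.ofReal_cpow hy0.le, ← Complex.ofReal_cpow (sub_nonneg.2 hy1.le),
      ← Complex.ofReal_mul, RCLike.re_to_complex, Complex.ofReal_re]
  · exact ((intervalIntegrable_iff_integrableOn_Ioc_of_le zero_le_one).1
      (Complex.betaIntegral_convergent (by simpa) (by simpa))).mono_set Ioo_subset_Ioc_self

theorem integral_Ioo_sub_mul_rpow_mul_one_sub_rpow (c : ℝ) {a b : ℝ} (ha : 0 < a) (hb : 0 < b) :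
    ∫ y in Ioo 0 1, (c - y) * (y ^ (a - 1) * (1 - y) ^ (b - 1)) =
      (c - a / (a + b)) * ProbabilityTheory.beta a b := by
  have ha1 : 0 < a + 1 := by linarith
  have hshift : ∀ y ∈ Ioo (0 : ℝ) 1, (c - y) * (y ^ (a - 1) * (1 - y) ^ (b - 1)) =
      c * (y ^ (a - 1) * (1 - y) ^ (b - 1)) - y ^ (a + 1 - 1) * (1 - y) ^ (b - 1) :=
    fun y ⟨hy0, _⟩ => by
      rw [add_sub_cancel_right, rpow_sub_one hy0.ne']
      field_simp
  have hbeta_succ :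
      ProbabilityTheory.beta (a + 1) b = a / (a + b) * ProbabilityTheory.beta a b := by
    simp only [ProbabilityTheory.beta, add_right_comm a 1 b, Gamma_add_one ha.ne',
      Gamma_add_one (add_pos ha hb).ne']
    field_simp
  rw [setIntegral_congr_fun measurableSet_Ioo hshift, integral_sub
    ((integrableOn_Ioo_rpow_mul_one_sub_rpow ha hb).const_mul c)
    (integrableOn_Ioo_rpow_mul_one_sub_rpow ha1 hb), integral_const_mul,
    integral_Ioo_rpow_mul_one_sub_rpow ha hb, integral_Ioo_rpow_mul_one_sub_rpow ha1 hb, hbeta_succ]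
  ring

theorem inv_sq_mul_rpow_mul_pgflKernel_inv_sub_one {N y : ℝ} (δ : ℝ) (hN : N ≠ 1)
    (hy : y ∈ Ioo 0 1) :
    (y ^ 2)⁻¹ * ((y⁻¹ - 1) ^ (-δ - 1) * pgflKernel N (y⁻¹ - 1)) =
      -((N - 1) ^ 2)⁻¹ * ((2 * N - 1 - y) * (y ^ (δ - 1) * (1 - y) ^ ((1 - δ) - 1))) := by
  obtain ⟨hy0, hy1⟩ := hy
  have hN1 : N - 1 ≠ 0 := sub_ne_zero.2 hN
  have h1y : 0 < 1 - y := sub_pos.2 hy1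
  rw [show y⁻¹ - 1 = (1 - y) / y by field_simp, div_rpow h1y.le hy0.le, rpow_sub_one hy0.ne',
    rpow_sub_one h1y.ne', rpow_sub_one hy0.ne', show 1 - δ - 1 = -δ by ring, rpow_neg hy0.le,
    rpow_neg h1y.le, pgflKernel]
  have := (rpow_pos_of_pos hy0 δ).ne'
  have := (rpow_pos_of_pos h1y δ).ne'
  field_simp
  ring

theorem pgfl_second_moment_integral_general (d : ℕ)
    (α δ θ r₀ N : ℝ) (hα : 0 < α) (hθ : 0 < θ) (hr : 0 < r₀) (hN : 1 < N)
    (hδ : δ = (d : ℝ) / α) (hδ0 : 0 < δ) (hδ1 : δ < 1) :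
    (d : ℝ) * ∫ r in Set.Ioi (0 : ℝ),
        (1 - N ^ 2 * (1 + θ * r₀ ^ α * r ^ (-α)) ^ 2 /
          (N + (N - 1) * θ * r₀ ^ α * r ^ (-α)) ^ 2) * r ^ ((d : ℝ) - 1) =
      -(r₀ ^ (d : ℝ) * θ ^ δ * (Real.Gamma (1 + δ) * Real.Gamma (1 - δ)) *
        (2 * N - 1 - δ) * N ^ (-δ) * (N - 1) ^ (δ - 2)) := by
  have hN1 : 0 < N - 1 := sub_pos.2 hN
  set κ := θ * r₀ ^ α * (N - 1) / N with hκ_def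
  have hκ : 0 < κ := by positivity
  have hintegrand : ∀ r ∈ Ioi (0 : ℝ), (1 - N ^ 2 * (1 + θ * r₀ ^ α * r ^ (-α)) ^ 2 /
      (N + (N - 1) * θ * r₀ ^ α * r ^ (-α)) ^ 2) * r ^ ((d : ℝ) - 1) =
      r ^ ((d : ℝ) - 1) • pgflKernel N (κ * r ^ (-α)) := fun r (hr' : 0 < r) => by
    have := (rpow_pos_of_pos hr' (-α)).ne'
    have : 1 + θ * r₀ ^ α * (N - 1) / N * r ^ (-α) ≠ 0 := by positivity
    rw [smul_eq_mul, mul_comm, pgflKernel, hκ_def]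
    congr 1
    field_simp
  have hκδ : κ ^ δ = θ ^ δ * r₀ ^ (d : ℝ) * (N - 1) ^ δ / N ^ δ := by
    rw [div_rpow (by positivity) (by positivity), mul_rpow (by positivity) hN1.le,
      mul_rpow hθ.le (by positivity), ← rpow_mul hr.le, hδ, mul_div_cancel₀ _ hα.ne']
  rw [setIntegral_congr_fun measurableSet_Ioi hintegrand, integral_Ioi_comp_mul_rpow_neg _ hκ hα,
    ← hδ, integral_Ioi_eq_integral_Ioo_inv_sub_one]
  simp only [smul_eq_mul]
  rw [setIntegral_congr_fun measurableSet_Ioo fun y hy =>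
      inv_sq_mul_rpow_mul_pgflKernel_inv_sub_one δ hN.ne' hy, integral_const_mul,
    integral_Ioo_sub_mul_rpow_mul_one_sub_rpow _ hδ0 (sub_pos.2 hδ1)]
  have hd : (d : ℝ) = δ * α := by rw [hδ, div_mul_cancel₀ _ hα.ne']
  rw [hκδ, add_sub_cancel, div_one, ProbabilityTheory.beta, add_sub_cancel, Gamma_one, div_one,
    add_comm 1 δ, Gamma_add_one hδ0.ne', rpow_neg (by positivity), rpow_sub hN1, rpow_two, hd]
  field_simp

theorem pgfl_second_moment_integral (d : ℕ) (hd : 1 ≤ d)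
    (α δ θ r₀ N : ℝ) (hα : 0 < α) (hθ : 0 < θ) (hr : 0 < r₀) (hN : 1 < N)
    (hδ : δ = (d : ℝ) / α) (hδ0 : 0 < δ) (hδ1 : δ < 1) :
    (d : ℝ) * ∫ r in Set.Ioi (0 : ℝ),
        (1 - N ^ 2 * (1 + θ * r₀ ^ α * r ^ (-α)) ^ 2 /
          (N + (N - 1) * θ * r₀ ^ α * r ^ (-α)) ^ 2) * r ^ ((d : ℝ) - 1) =
      -(r₀ ^ (d : ℝ) * θ ^ δ * (Real.Gamma (1 + δ) * Real.Gamma (1 - δ)) *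
        (2 * N - 1 - δ) * N ^ (-δ) * (N - 1) ^ (δ - 2)) :=
  pgfl_second_moment_integral_general d α δ θ r₀ N hα hθ hr hN hδ hδ0 hδ1
end
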